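/- Let v ∈ V be a generator and w ∈ W_Γ an element with vw = wv and not v ≤_R w. Then for every u ∈ W_Γ one has w ≤_R v·u if and only if w ≤_R u; equivalently, the set {u ∈ W_Γ : w ≤_R u} is invariant under left translation by v. -/

import Mathlib

/-!
Tits' signed action of `W` on `W × ZMod 2` gives a parity `η(w, t)` of the occurrences of `t` in
the right inversion sequence of any word for `w`; for a right-angled Coxeter matrix the relations
to check only involve commuting generators. It satisfies the cocycle rule
`η(xy, t) = η(y, t) + η(x, y t y⁻¹)`, and `η(w, s) = 1` iff `s` is a right descent of `w`.
If `w` commutes with `s` and `s` is not a descent of `w`, then `w s w⁻¹ = s` and the cocycle rule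
give `η(x w, s) = η(x, s)`: `s` is a left descent of `w x` iff it is one of `x`. Writing
`u = w x` with `ℓ(u) = ℓ(w) + ℓ(x)`, multiplying by `s` on the left thus changes `ℓ(u)` and
`ℓ(x)` by the same `±1`, which preserves `w ≤_R u`.
-/

open CoxeterSystem
open scoped Classical

/-- The right-angled Coxeter matrix associated with a simple graph `Γ`:
`M v v = 1`, `M v v' = 2` if `v, v'` are adjacent, and `M v v' = 0` (representing `∞`)
otherwise. -/
noncomputable def SimpleGraph.racMatrix {V : Type*} (Γ : SimpleGraph V) : CoxeterMatrix V where
  M := Matrix.of fun v w => if v = w then 1 else if Γ.Adj v w then 2 else 0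
  isSymm := by
    classical
    ext i j
    by_cases h : i = j
    · simp [Matrix.transpose_apply, h]
    · simp only [Matrix.transpose_apply, Matrix.of_apply, if_neg h, if_neg (Ne.symm h)]
      rw [Γ.adj_comm]
  diagonal i := by simp
  off_diagonal i i' h := by
    simp only [Matrix.of_apply, if_neg h]
    split <;> simp

/-- The right-angled Coxeter group `W_Γ` of a simple graph `Γ`. -/
abbrev SimpleGraph.racGroup {V : Type*} (Γ : SimpleGraph V) : Type _ := Γ.racMatrix.Group

/-- The canonical Coxeter system on `W_Γ`. -/
noncomputable def SimpleGraph.racCS {V : Type*} (Γ : SimpleGraph V) :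
    CoxeterSystem Γ.racMatrix Γ.racGroup := Γ.racMatrix.toCoxeterSystem

/-- The weak right Bruhat order on `W_Γ`: `u ≤_R w` iff `ℓ(w) = ℓ(u) + ℓ(u⁻¹w)`. -/
def SimpleGraph.leR {V : Type*} (Γ : SimpleGraph V) (u w : Γ.racGroup) : Prop :=
  Γ.racCS.length w = Γ.racCS.length u + Γ.racCS.length (u⁻¹ * w)

/-- A closed walk in the simple graph `G`: a nonempty sequence of vertices in which consecutive
vertices are adjacent and additionally the first and the last vertex are adjacent. -/
def SimpleGraph.IsClosedWalkList {V : Type*} (G : SimpleGraph V) (l : List V) : Prop :=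
  l ≠ [] ∧ l.Chain' G.Adj ∧ ∀ h : l ≠ [], G.Adj (l.head h) (l.getLast h)

def CoxeterMatrix.IsRightAngled {B : Type*} (M : CoxeterMatrix B) : Prop :=
  ∀ i j, i ≠ j → M i j = 0 ∨ M i j = 2

namespace CoxeterSystem

variable {B W : Type*} [Group W] {M : CoxeterMatrix B} (cs : CoxeterSystem M W)

local prefix:100 "s " => cs.simple
local prefix:100 "π " => cs.wordProd
local prefix:100 "ℓ " => cs.length

theorem commute_simple_of_eq_two {i j : B} (h : M i j = 2) : Commute (s i) (s j) := by
  have h2 := cs.simple_mul_simple_pow i j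
  rwa [h, pow_two, mul_eq_one_iff_eq_inv, mul_inv_rev, inv_simple, inv_simple] at h2

theorem simple_conj_eq_iff (i : B) (t u : W) : s i * t * s i = u ↔ t = s i * u * s i := by
  constructor <;> rintro rfl <;> simp [mul_assoc]

theorem simple_conj_eq_simple_iff (i : B) (t : W) : s i * t * s i = s i ↔ t = s i := by
  rw [simple_conj_eq_iff, simple_mul_simple_self, one_mul]

theorem simple_conj_simple_of_commute {i j : B} (h : Commute (s i) (s j)) :
    s j * s i * s j = s i := by
  rw [← h.eq, mul_assoc, simple_mul_simple_self, mul_one]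

noncomputable def titsFun (i : B) (p : W × ZMod 2) : W × ZMod 2 :=
  (s i * p.1 * s i, p.2 + if p.1 = s i then 1 else 0)

theorem titsFun_involutive (i : B) : Function.Involutive (cs.titsFun i) := by
  rintro ⟨t, ε⟩
  by_cases h : t = s i
  · subst h
    simp only [titsFun, simple_conj_eq_simple_iff, if_true, add_assoc]
    simp [show (1 + 1 : ZMod 2) = 0 from rfl]
  · simp only [titsFun, simple_conj_eq_simple_iff, if_neg h, add_zero]
    simp [mul_assoc]

theorem titsFun_comm_of_commute {i j : B} (h : Commute (s i) (s j)) (p : W × ZMod 2) :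
    cs.titsFun i (cs.titsFun j p) = cs.titsFun j (cs.titsFun i p) := by
  obtain ⟨t, ε⟩ := p
  refine Prod.ext ?_ ?_
  · calc s i * (s j * t * s j) * s i = (s i * s j) * t * (s j * s i) := by simp only [mul_assoc]
      _ = (s j * s i) * t * (s i * s j) := by rw [h.eq, h.symm.eq]
      _ = s j * (s i * t * s i) * s j := by simp only [mul_assoc]
  · simp only [titsFun, simple_conj_eq_iff, simple_conj_simple_of_commute cs h,
      simple_conj_simple_of_commute cs h.symm]
    ring

noncomputable def titsPerm (i : B) : Equiv.Perm (W × ZMod 2) :=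
  (cs.titsFun_involutive i).toPerm

theorem isLiftable_titsPerm (hM : M.IsRightAngled) : M.IsLiftable cs.titsPerm := by
  intro i j
  by_cases hij : i = j
  · subst hij
    ext1 p
    simp [titsPerm, (cs.titsFun_involutive i) p]
  · rcases hM i j hij with h | h
    · simp [h]
    · rw [h, pow_two]
      ext1 p
      simp [titsPerm, titsFun_comm_of_commute cs (cs.commute_simple_of_eq_two h),
        (cs.titsFun_involutive _) _]

section RightAngled

variable (hM : M.IsRightAngled)

noncomputable def titsHom : W →* Equiv.Perm (W × ZMod 2) :=
  cs.lift ⟨cs.titsPerm, cs.isLiftable_titsPerm hM⟩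

theorem titsHom_simple (i : B) : cs.titsHom hM (s i) = cs.titsPerm i :=
  cs.lift_apply_simple _ i

theorem titsHom_wordProd (ω : List B) (t : W) (ε : ZMod 2) :
    cs.titsHom hM (π ω) (t, ε) =
      (π ω * t * (π ω)⁻¹, ε + ((cs.rightInvSeq ω).count t : ZMod 2)) := by
  induction ω with
  | nil => simp
  | cons i ω ih =>
    rw [wordProd_cons, map_mul, Equiv.Perm.mul_apply, ih, titsHom_simple]
    refine Prod.ext ?_ ?_
    · simp [titsPerm, titsFun, mul_assoc]
    · have : (π ω * t * (π ω)⁻¹ = s i) ↔ ((π ω)⁻¹ * s i * π ω = t) := by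
        constructor <;> intro h <;> rw [← h] <;> group
      simp only [titsPerm, titsFun, Function.Involutive.coe_toPerm, rightInvSeq, List.count_cons,
        this, beq_iff_eq]
      push_cast
      ring

noncomputable def inversionParity (w t : W) : ZMod 2 :=
  (cs.titsHom hM w (t, 0)).2

theorem titsHom_apply (w t : W) (ε : ZMod 2) :
    cs.titsHom hM w (t, ε) = (w * t * w⁻¹, ε + cs.inversionParity hM w t) := by
  obtain ⟨ω, rfl⟩ := cs.wordProd_surjective w
  simp [inversionParity, titsHom_wordProd]

theorem inversionParity_mul (x y t : W) :
    cs.inversionParity hM (x * y) t =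
      cs.inversionParity hM y t + cs.inversionParity hM x (y * t * y⁻¹) := by
  rw [inversionParity, map_mul, Equiv.Perm.mul_apply, titsHom_apply, titsHom_apply, zero_add]

theorem inversionParity_wordProd (ω : List B) (t : W) :
    cs.inversionParity hM (π ω) t = (cs.rightInvSeq ω).count t := by
  simp [inversionParity, titsHom_wordProd]

theorem inversionParity_simple_self (i : B) : cs.inversionParity hM (s i) (s i) = 1 := by
  simpa using cs.inversionParity_wordProd hM [i] (s i)

theorem inversionParity_simple_of_not_isRightDescent {w : W} {i : B}
    (hw : ¬ cs.IsRightDescent w i) : cs.inversionParity hM w (s i) = 0 := by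
  obtain ⟨ω, hω, rfl⟩ := cs.exists_isReduced w
  have hmem : s i ∉ cs.rightInvSeq ω := fun hmem =>
    hw ((cs.isRightInversion_simple_iff_isRightDescent _ i).mp
      (cs.isRightInversion_of_mem_rightInvSeq hω hmem))
  simp [inversionParity_wordProd, List.count_eq_zero.mpr hmem]

theorem inversionParity_simple (w : W) (i : B) :
    cs.inversionParity hM w (s i) = if cs.IsRightDescent w i then 1 else 0 := by
  split_ifs with hw
  · have hws : ¬ cs.IsRightDescent (w * s i) i := by
      rw [← cs.isRightDescent_iff_not_isRightDescent_mul]; exact hw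
    calc cs.inversionParity hM w (s i)
        = cs.inversionParity hM (w * s i * s i) (s i) := by rw [simple_mul_simple_cancel_right]
      _ = 1 := by
        rw [inversionParity_mul, inversionParity_simple_self, inv_simple,
          simple_mul_simple_cancel_right, cs.inversionParity_simple_of_not_isRightDescent hM hws,
          add_zero]
  · exact cs.inversionParity_simple_of_not_isRightDescent hM hw

end RightAngled

theorem isRightDescent_mul_iff_of_commute (hM : M.IsRightAngled) {w : W} {i : B}
    (hc : Commute w (s i)) (hw : ¬ cs.IsRightDescent w i) (x : W) :
    cs.IsRightDescent (x * w) i ↔ cs.IsRightDescent x i := by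
  have h := cs.inversionParity_mul hM x w (s i)
  rw [hc.mul_inv_cancel, inversionParity_simple, inversionParity_simple, inversionParity_simple,
    if_neg hw, zero_add] at h
  split_ifs at h <;> simp_all

theorem isLeftDescent_mul_iff_of_commute (hM : M.IsRightAngled) {w : W} {i : B}
    (hc : Commute w (s i)) (hw : ¬ cs.IsLeftDescent w i) (x : W) :
    cs.IsLeftDescent (w * x) i ↔ cs.IsLeftDescent x i := by
  rw [← isRightDescent_inv_iff, ← isRightDescent_inv_iff, mul_inv_rev]
  exact cs.isRightDescent_mul_iff_of_commute hM hc.inv_left (by rwa [isRightDescent_inv_iff]) _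

theorem length_simple_mul_eq_of_commute (hM : M.IsRightAngled) {w u : W} {i : B}
    (hc : Commute w (s i)) (hw : ¬ cs.IsLeftDescent w i) (hu : ℓ u = ℓ w + ℓ (w⁻¹ * u)) :
    ℓ (s i * u) = ℓ w + ℓ (w⁻¹ * (s i * u)) := by
  obtain ⟨x, rfl⟩ : ∃ x, u = w * x := ⟨w⁻¹ * u, (mul_inv_cancel_left w u).symm⟩
  have hx : w⁻¹ * (s i * (w * x)) = s i * x := by
    rw [← mul_assoc, hc.inv_left.eq, mul_assoc, inv_mul_cancel_left]
  rw [inv_mul_cancel_left] at hu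
  rw [hx]
  by_cases h : cs.IsLeftDescent x i
  · have hwx := (cs.isLeftDescent_mul_iff_of_commute hM hc hw x).mpr h
    rw [isLeftDescent_iff] at h hwx
    omega
  · have hwx := mt (cs.isLeftDescent_mul_iff_of_commute hM hc hw x).mp h
    rw [not_isLeftDescent_iff] at h hwx
    omega

end CoxeterSystem

theorem SimpleGraph.racMatrix_isRightAngled {V : Type*} (Γ : SimpleGraph V) :
    Γ.racMatrix.IsRightAngled := by
  intro i j hij
  simp [SimpleGraph.racMatrix, hij]
  tauto

theorem SimpleGraph.leR_simple_iff {V : Type*} (Γ : SimpleGraph V) (v : V) (w : Γ.racGroup) :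
    Γ.leR (Γ.racCS.simple v) w ↔ Γ.racCS.IsLeftDescent w v := by
  rw [SimpleGraph.leR, length_simple, inv_simple, isLeftDescent_iff]
  omega

theorem SimpleGraph.leR_simple_mul_iff {V : Type*} (Γ : SimpleGraph V) {v : V} {w : Γ.racGroup}
    (hcomm : Commute (Γ.racCS.simple v) w) (hnle : ¬ Γ.leR (Γ.racCS.simple v) w)
    (u : Γ.racGroup) : Γ.leR w (Γ.racCS.simple v * u) ↔ Γ.leR w u := by
  rw [leR_simple_iff] at hnle
  have hle : ∀ u, Γ.leR w u → Γ.leR w (Γ.racCS.simple v * u) := fun _ =>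
    Γ.racCS.length_simple_mul_eq_of_commute Γ.racMatrix_isRightAngled hcomm.symm hnle
  exact ⟨fun h => by simpa using hle _ h, hle u⟩

theorem statement3_general {V : Type*} (Γ : SimpleGraph V) (v : V) (w : Γ.racGroup)
    (hcomm : Γ.racCS.simple v * w = w * Γ.racCS.simple v)
    (hnle : ¬ Γ.leR (Γ.racCS.simple v) w) :
    (∀ u : Γ.racGroup, Γ.leR w (Γ.racCS.simple v * u) ↔ Γ.leR w u) ∧
    (fun u : Γ.racGroup => Γ.racCS.simple v * u) '' {u | Γ.leR w u} = {u | Γ.leR w u} := by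
  refine ⟨Γ.leR_simple_mul_iff hcomm hnle, ?_⟩
  rw [Set.image_mul_left, inv_simple]
  ext u
  exact Γ.leR_simple_mul_iff hcomm hnle u

/-- If `v` is a generator and `w ∈ W_Γ` commutes with `v` but `v ≤_R w` fails,
then for every `u ∈ W_Γ` one has `w ≤_R v u ↔ w ≤_R u`; equivalently, the set `{u : w ≤_R u}`
is invariant under left translation by `v`. -/
theorem statement3 {V : Type*} [Fintype V] (Γ : SimpleGraph V) (v : V) (w : Γ.racGroup)
    (hcomm : Γ.racCS.simple v * w = w * Γ.racCS.simple v)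
    (hnle : ¬ Γ.leR (Γ.racCS.simple v) w) :
    (∀ u : Γ.racGroup, Γ.leR w (Γ.racCS.simple v * u) ↔ Γ.leR w u) ∧
    (fun u : Γ.racGroup => Γ.racCS.simple v * u) '' {u | Γ.leR w u} = {u | Γ.leR w u} :=
  statement3_general Γ v w hcomm hnle
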